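/- arXiv:1703.00289 — 2 statements merged into one kernel-verified Lean document; each statement's English description precedes it below -/
import Mathlib

section
/- Linear programming duality characterization of optimal transport solutions: a matrix X ∈ ℝ_+^{n×m} is an optimal solution of the problem of maximizing ∑_{i,j} a_{ij} x_{ij} subject to ∑_i x_{ij} = c_j, ∑_j x_{ij} = r_i, and x_{ij} ≥ 0, if and only if X is feasible and there exist λ ∈ ℝ^n and μ ∈ ℝ^m such that a_{ij} ≤ λ_i + μ_j for all (i,j), with equality whenever x_{ij} > 0. -/
/-!
If `X` is optimal, no direction `d` with zero marginals that is nonnegative off the support of `X`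
increases `∑ a d`, since `X + ε d` is feasible for small `ε > 0`. By Farkas' lemma, in its mixed
form with equality constraints on the support, this is exactly the solvability of
`a i j ≤ λ i + μ j` with equality on the support; Farkas' lemma itself is proved by Bartl's
induction on the number of constraints. Conversely, for every feasible `Y`,
`∑ a Y ≤ ∑ (λ + μ) Y = ∑ λ r + ∑ μ c`, with equality for `Y = X` by complementary slackness.
-/

open Finset

/-- Feasibility for the transport problem: nonnegativity and both marginals. -/
def Feasible {ι κ : Type*} [Fintype ι] [Fintype κ]
    (r : ι → ℝ) (c : κ → ℝ) (X : ι → κ → ℝ) : Prop :=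
  (∀ i j, 0 ≤ X i j) ∧ (∀ j, ∑ i, X i j = c j) ∧ (∀ i, ∑ j, X i j = r i)

namespace Module.Dual

variable {𝕜 V ι : Type*} [Field 𝕜] [LinearOrder 𝕜] [IsStrictOrderedRing 𝕜]
  [AddCommGroup V] [Module 𝕜 V]

theorem exists_eq_sum_smul_of_forall_apply_nonpos (T : ι → Prop) (s : Finset ι)
    (f : ι → Module.Dual 𝕜 V) (g : Module.Dual 𝕜 V)
    (hg : ∀ x, (∀ i ∈ s, ¬T i → f i x ≤ 0) → (∀ i ∈ s, T i → f i x = 0) → g x ≤ 0) :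
    ∃ c : ι → 𝕜, (∀ i, ¬T i → 0 ≤ c i) ∧ g = ∑ i ∈ s, c i • f i := by
  classical
  induction s using Finset.induction_on generalizing f g with
  | empty =>
    refine ⟨0, fun _ _ => le_rfl, LinearMap.ext fun x => ?_⟩
    have h₁ := hg x (by simp) (by simp)
    have h₂ := hg (-x) (by simp) (by simp)
    simp only [map_neg, neg_nonpos] at h₂
    simpa using le_antisymm h₁ h₂
  | insert a s ha ih =>
    by_cases hs : ∀ x, (∀ i ∈ s, ¬T i → f i x ≤ 0) → (∀ i ∈ s, T i → f i x = 0) → g x ≤ 0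
    · obtain ⟨c, hc, rfl⟩ := ih f g hs
      refine ⟨Function.update c a 0, fun i hi => ?_, ?_⟩
      · rcases eq_or_ne i a with rfl | hia
        · simp
        · simpa [hia] using hc i hi
      · rw [sum_insert ha, Function.update_self, zero_smul, zero_add]
        exact sum_congr rfl fun i hi => by
          rw [Function.update_of_ne (ne_of_mem_of_not_mem hi ha)]
    push Not at hs
    obtain ⟨x₀, hle, heq, hgx₀⟩ := hs
    -- `x₀` violates no constraint of `s` but `g x₀ > 0`, so it must violate the constraint `a`.
    have hfa : f a x₀ ≠ 0 ∧ (¬T a → 0 < f a x₀) := by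
      have hviol : ¬((¬T a → f a x₀ ≤ 0) ∧ (T a → f a x₀ = 0)) := fun ⟨h₁, h₂⟩ =>
        (hg x₀ (forall_mem_insert _ _ _ |>.2 ⟨h₁, hle⟩)
          (forall_mem_insert _ _ _ |>.2 ⟨h₂, heq⟩)).not_gt hgx₀
      by_cases hTa : T a
      · simp_all
      · have : 0 < f a x₀ := by simpa [hTa] using hviol
        exact ⟨this.ne', fun _ => this⟩
    -- Project along `x₀` onto `ker (f a)` and apply the induction hypothesis there.
    let P : V →ₗ[𝕜] V := LinearMap.id - (f a x₀)⁻¹ • (f a).smulRight x₀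
    have hP : ∀ x, P x = x - ((f a x₀)⁻¹ * f a x) • x₀ := fun x => by
      simp [P, mul_smul]
    have hfaP : ∀ x, f a (P x) = 0 := fun x => by
      rw [hP, map_sub, map_smul, smul_eq_mul, mul_right_comm, inv_mul_cancel₀ hfa.1, one_mul,
        sub_self]
    obtain ⟨c, hc, hgP⟩ := ih (fun i => f i ∘ₗ P) (g ∘ₗ P) fun x hle' heq' =>
      hg (P x) (forall_mem_insert _ _ _ |>.2 ⟨fun _ => (hfaP x).le, hle'⟩)
        (forall_mem_insert _ _ _ |>.2 ⟨fun _ => hfaP x, heq'⟩)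
    have hsum : ∑ i ∈ s, c i * f i x₀ ≤ 0 := sum_nonpos fun i hi => by
      by_cases hTi : T i
      · simp [heq i hi hTi]
      · exact mul_nonpos_of_nonneg_of_nonpos (hc i hTi) (hle i hi hTi)
    refine ⟨Function.update c a ((g x₀ - ∑ i ∈ s, c i * f i x₀) / f a x₀), fun i hi => ?_, ?_⟩
    · rcases eq_or_ne i a with rfl | hia
      · simpa using div_nonneg (by linarith) (hfa.2 hi).le
      · simpa [hia] using hc i hi
    · rw [sum_insert ha, Function.update_self, sum_congr rfl fun i hi =>
        congrArg (· • f i) (Function.update_of_ne (ne_of_mem_of_not_mem hi ha) _ c)]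
      ext x
      have hx := LinearMap.congr_fun hgP x
      simp only [LinearMap.comp_apply, hP, map_sub, map_smul, smul_eq_mul, LinearMap.coe_sum,
        Finset.sum_apply, LinearMap.smul_apply, mul_sub, sum_sub_distrib] at hx
      simp only [LinearMap.add_apply, LinearMap.coe_sum, Finset.sum_apply, LinearMap.smul_apply,
        smul_eq_mul]
      simp only [mul_left_comm (c _), ← mul_sum] at hx
      linear_combination hx

-- Homogenize: `x` solves the system iff `(x, 1)` satisfies the homogeneous constraints
-- `b k * t - f k x ≤ 0` (resp. `= 0`), so if it is unsolvable, these constraints force `t ≤ 0`.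
theorem exists_le_apply_of_forall_sum_mul_nonpos {K : Type*} [Fintype K]
    (f : K → Module.Dual 𝕜 V) (b : K → 𝕜) (T : K → Prop)
    (h : ∀ z : K → 𝕜, (∀ k, ¬T k → 0 ≤ z k) → (∀ x, ∑ k, z k * f k x = 0) →
      ∑ k, z k * b k ≤ 0) :
    ∃ x, ∀ k, b k ≤ f k x ∧ (T k → f k x = b k) := by
  by_contra hno
  let F : K → Module.Dual 𝕜 (V × 𝕜) := fun k =>
    b k • LinearMap.snd 𝕜 V 𝕜 - f k ∘ₗ LinearMap.fst 𝕜 V 𝕜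
  have hF : ∀ k x t, F k (x, t) = b k * t - f k x := fun _ _ _ => rfl
  obtain ⟨z, hz, hsnd⟩ :=
    exists_eq_sum_smul_of_forall_apply_nonpos T univ F (LinearMap.snd 𝕜 V 𝕜) fun ⟨x, t⟩ hle heq => by
      by_contra! ht
      change 0 < t at ht
      refine hno ⟨t⁻¹ • x, fun k => ?_⟩
      rw [map_smul, smul_eq_mul, le_inv_mul_iff₀ ht, inv_mul_eq_iff_eq_mul₀ ht.ne']
      by_cases hk : T k
      · have := heq k (mem_univ k) hk
        rw [hF] at this
        exact ⟨by linarith, fun _ => by linarith⟩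
      · have := hle k (mem_univ k) hk
        rw [hF] at this
        exact ⟨by linarith, fun h => absurd h hk⟩
  have hb : ∑ k, z k * b k = 1 := by
    simpa [hF] using (LinearMap.congr_fun hsnd (0, 1)).symm
  have hf : ∀ x, ∑ k, z k * f k x = 0 := fun x => by
    simpa [hF] using (LinearMap.congr_fun hsnd (x, 0)).symm
  linarith [h z hz hf]

end Module.Dual

open Filter Topology in
theorem exists_pos_forall_nonneg_add_mul {α : Type*} [Finite α] {x d : α → ℝ}
    (hx : ∀ a, 0 ≤ x a) (hd : ∀ a, ¬0 < x a → 0 ≤ d a) :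
    ∃ ε > 0, ∀ a, 0 ≤ x a + ε * d a := by
  suffices ∀ᶠ ε in 𝓝[>] 0, ∀ a, 0 ≤ x a + ε * d a from
    (this.and self_mem_nhdsWithin).exists.imp fun ε h => ⟨h.2, h.1⟩
  refine eventually_all.2 fun a => ?_
  by_cases hxa : 0 < x a
  · have : Tendsto (fun ε => x a + ε * d a) (𝓝[>] 0) (𝓝 (x a)) :=
      ((show Continuous fun ε : ℝ => x a + ε * d a by fun_prop).tendsto' 0 (x a)
        (by simp)).mono_left nhdsWithin_le_nhds
    exact (this.eventually (lt_mem_nhds hxa)).mono fun _ h => h.le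
  · filter_upwards [self_mem_nhdsWithin] with ε hε
    rw [le_antisymm (not_lt.1 hxa) (hx a), zero_add]
    exact mul_nonneg (le_of_lt hε) (hd a hxa)

namespace Feasible

variable {ι κ : Type*} [Fintype ι] [Fintype κ] {r : ι → ℝ} {c : κ → ℝ} {X : ι → κ → ℝ}

theorem sum_sum_add_mul_eq (hX : Feasible r c X) (lam : ι → ℝ) (mu : κ → ℝ) :
    ∑ i, ∑ j, (lam i + mu j) * X i j = ∑ i, lam i * r i + ∑ j, mu j * c j := by
  simp only [add_mul, sum_add_distrib, ← mul_sum, hX.2.2]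
  rw [sum_comm]
  simp only [← mul_sum, hX.2.1]

theorem add_mul_of_sum_eq_zero {d : ι → κ → ℝ} {ε : ℝ} (hX : Feasible r c X) (hrow : ∀ i, ∑ j, d i j = 0)
    (hcol : ∀ j, ∑ i, d i j = 0) (hnonneg : ∀ i j, 0 ≤ X i j + ε * d i j) :
    Feasible r c fun i j => X i j + ε * d i j :=
  ⟨hnonneg, fun j => by simp [sum_add_distrib, ← mul_sum, hcol, hX.2.1],
    fun i => by simp [sum_add_distrib, ← mul_sum, hrow, hX.2.2]⟩

variable {a : ι → κ → ℝ}

theorem sum_sum_mul_nonpos_of_forall_le (hX : Feasible r c X)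
    (hopt : ∀ Y, Feasible r c Y → ∑ i, ∑ j, a i j * Y i j ≤ ∑ i, ∑ j, a i j * X i j)
    {d : ι → κ → ℝ} (hrow : ∀ i, ∑ j, d i j = 0) (hcol : ∀ j, ∑ i, d i j = 0)
    (hd : ∀ i j, ¬0 < X i j → 0 ≤ d i j) :
    ∑ i, ∑ j, a i j * d i j ≤ 0 := by
  obtain ⟨ε, hε, hnonneg⟩ := exists_pos_forall_nonneg_add_mul
    (x := fun p : ι × κ => X p.1 p.2) (d := fun p => d p.1 p.2) (fun _ => hX.1 _ _) (fun _ => hd _ _)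
  have h := hopt _ (hX.add_mul_of_sum_eq_zero hrow hcol fun i j => hnonneg (i, j))
  simp only [mul_add, sum_add_distrib, mul_left_comm _ ε, ← mul_sum] at h
  exact nonpos_of_mul_nonpos_right (by linarith) hε

theorem exists_potentials_of_forall_le (hX : Feasible r c X)
    (hopt : ∀ Y, Feasible r c Y → ∑ i, ∑ j, a i j * Y i j ≤ ∑ i, ∑ j, a i j * X i j) :
    ∃ (lam : ι → ℝ) (mu : κ → ℝ),
      ∀ i j, a i j ≤ lam i + mu j ∧ (0 < X i j → a i j = lam i + mu j) := by
  classical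
  let f : ι × κ → Module.Dual ℝ ((ι → ℝ) × (κ → ℝ)) := fun p =>
    LinearMap.proj (R := ℝ) p.1 ∘ₗ LinearMap.fst ℝ (ι → ℝ) (κ → ℝ) +
      LinearMap.proj (R := ℝ) p.2 ∘ₗ LinearMap.snd ℝ (ι → ℝ) (κ → ℝ)
  have hf : ∀ p lam mu, f p (lam, mu) = lam p.1 + mu p.2 := fun _ _ _ => rfl
  obtain ⟨⟨lam, mu⟩, h⟩ := Module.Dual.exists_le_apply_of_forall_sum_mul_nonpos f
    (fun p => a p.1 p.2) (fun p => 0 < X p.1 p.2) fun z hz hzf => by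
      have hrow : ∀ i, ∑ j, z (i, j) = 0 := fun i => by
        have := hzf (Pi.single i 1, 0)
        simp only [hf, Fintype.sum_prod_type, Pi.single_apply] at this
        rw [sum_comm] at this
        simpa using this
      have hcol : ∀ j, ∑ i, z (i, j) = 0 := fun j => by
        simpa [hf, Fintype.sum_prod_type, Pi.single_apply] using hzf (0, Pi.single j 1)
      simpa [Fintype.sum_prod_type, mul_comm] using
        hX.sum_sum_mul_nonpos_of_forall_le hopt hrow hcol fun i j => hz (i, j)
  exact ⟨lam, mu, fun i j => ⟨(h (i, j)).1, fun hx => ((h (i, j)).2 hx).symm⟩⟩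

theorem sum_sum_mul_le_of_potentials (hX : Feasible r c X) {Y : ι → κ → ℝ}
    (hY : Feasible r c Y) {lam : ι → ℝ} {mu : κ → ℝ}
    (h : ∀ i j, a i j ≤ lam i + mu j ∧ (0 < X i j → a i j = lam i + mu j)) :
    ∑ i, ∑ j, a i j * Y i j ≤ ∑ i, ∑ j, a i j * X i j :=
  calc ∑ i, ∑ j, a i j * Y i j ≤ ∑ i, ∑ j, (lam i + mu j) * Y i j :=
        sum_le_sum fun i _ => sum_le_sum fun j _ =>
          mul_le_mul_of_nonneg_right (h i j).1 (hY.1 i j)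
    _ = ∑ i, ∑ j, (lam i + mu j) * X i j := by
        rw [hY.sum_sum_add_mul_eq, hX.sum_sum_add_mul_eq]
    _ = ∑ i, ∑ j, a i j * X i j := sum_congr rfl fun i _ => sum_congr rfl fun j _ => by
        rcases (hX.1 i j).lt_or_eq with hpos | hzero
        · rw [(h i j).2 hpos]
        · rw [← hzero, mul_zero, mul_zero]

end Feasible

theorem stmt_4_general {ι κ : Type*} [Fintype ι] [Fintype κ]
    (a : ι → κ → ℝ) (r : ι → ℝ) (c : κ → ℝ) (X : ι → κ → ℝ) :
    (Feasible r c X ∧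
      ∀ Y : ι → κ → ℝ, Feasible r c Y →
        ∑ i, ∑ j, a i j * Y i j ≤ ∑ i, ∑ j, a i j * X i j) ↔
    (Feasible r c X ∧
      ∃ (lam : ι → ℝ) (mu : κ → ℝ),
        ∀ i j, a i j ≤ lam i + mu j ∧ (0 < X i j → a i j = lam i + mu j)) :=
  ⟨fun ⟨hX, hopt⟩ => ⟨hX, hX.exists_potentials_of_forall_le hopt⟩,
    fun ⟨hX, _, _, h⟩ => ⟨hX, fun _ hY => hX.sum_sum_mul_le_of_potentials hY h⟩⟩

/-- LP duality characterization of optimal transport solutions. -/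
theorem stmt_4 {ι κ : Type*} [Fintype ι] [Fintype κ]
    (a : ι → κ → ℝ) (r : ι → ℝ) (c : κ → ℝ)
    (hr : ∀ i, 0 < r i) (hc : ∀ j, 0 < c j)
    (hgf : ∑ i, r i = ∑ j, c j) (X : ι → κ → ℝ) :
    (Feasible r c X ∧
      ∀ Y : ι → κ → ℝ, Feasible r c Y →
        ∑ i, ∑ j, a i j * Y i j ≤ ∑ i, ∑ j, a i j * X i j) ↔
    (Feasible r c X ∧
      ∃ (lam : ι → ℝ) (mu : κ → ℝ),
        ∀ i j, a i j ≤ lam i + mu j ∧ (0 < X i j → a i j = lam i + mu j)) :=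
  stmt_4_general a r c X
end

section
/- A matrix X ∈ ℝ_+^{n×m} is a balanced solution of the linear MOMA maximization problem with coefficients b_{ij} > 0, column sums c_j, and row sums r_i, if and only if X is an optimal solution of the optimal transport (Monge–Kantorovich) maximization problem with weights a_{ij} = log b_{ij} and the same row and column sum constraints. -/
/-!
Both sides are equivalent to the existence of potentials `u, v` with
`u i + log (b i j) ≤ v j`, with equality on the support of `X`. Such potentials are a dual
solution satisfying complementary slackness, so `X` is transport-optimal; and with the weights
`exp (u i)` the matrix `X` maximizes a positively weighted sum of the objectives, so it is Pareto
efficient. Conversely, neither an optimal nor a Pareto efficient `X` admits a cycle through its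
support along which shifting mass (uniformly, resp. with suitable multiplicative weights) increases
`∑ log b`. In the absence of such cycles, longest-walk values in the graph on the rows give the
potentials; this replaces LP duality (Isermann's theorem).
-/

open Finset

/-- Primary feasibility: nonnegative entries and prescribed column sums. -/
def PrimFeasible {ι κ : Type*} [Fintype ι] (c : κ → ℝ) (X : ι → κ → ℝ) : Prop :=
  (∀ i j, 0 ≤ X i j) ∧ ∀ j, ∑ i, X i j = c j

/-- Pareto efficiency for the linear objectives `Ψ i = ∑ j, b i j * x i j`
subject to the primary constraints. -/
def ParetoEffLin {ι κ : Type*} [Fintype ι] [Fintype κ]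
    (b : ι → κ → ℝ) (c : κ → ℝ) (X : ι → κ → ℝ) : Prop :=
  PrimFeasible c X ∧
    ¬ ∃ Y : ι → κ → ℝ, PrimFeasible c Y ∧
      (∀ i, ∑ j, b i j * X i j ≤ ∑ j, b i j * Y i j) ∧
      (∃ i, ∑ j, b i j * X i j < ∑ j, b i j * Y i j)

/-- Balanced solution of the linear MOMA problem. -/
def BalancedLin {ι κ : Type*} [Fintype ι] [Fintype κ]
    (b : ι → κ → ℝ) (c : κ → ℝ) (r : ι → ℝ) (X : ι → κ → ℝ) : Prop :=
  ParetoEffLin b c X ∧ ∀ i, ∑ j, X i j = r i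

open Filter Topology

section WalkWeight

variable {ι : Type*} (d : ι → ι → ℝ)

def walkWeight (I : ℕ → ι) (m : ℕ) : ℝ :=
  ∑ t ∈ range m, d (I t) (I (t + 1))

theorem walkWeight_add (I : ℕ → ι) (m l : ℕ) :
    walkWeight d I (m + l) = walkWeight d I m + walkWeight d (fun x => I (m + x)) l :=
  sum_range_add _ m l

theorem walkWeight_congr {I I' : ℕ → ι} {m : ℕ} (h : ∀ t ≤ m, I t = I' t) :
    walkWeight d I m = walkWeight d I' m :=
  sum_congr rfl fun t ht => by
    have := mem_range.1 ht
    rw [h t (by omega), h (t + 1) (by omega)]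

theorem walkWeight_cons (i : ι) (I : ℕ → ι) (m : ℕ) :
    walkWeight d (fun | 0 => i | t + 1 => I t) (m + 1) = d i (I 0) + walkWeight d I m := by
  rw [walkWeight, sum_range_succ', add_comm]
  rfl

theorem walkWeight_le_skip {I : ℕ → ι} {p c : ℕ} (hI : I (p + c) = I p)
    (hcyc : walkWeight d (fun x => I (p + x)) c ≤ 0) (l : ℕ) :
    walkWeight d I (p + c + l) ≤
      walkWeight d (fun t => if t < p then I t else I (t + c)) (p + l) := by
  have hhead : walkWeight d (fun t => if t < p then I t else I (t + c)) p = walkWeight d I p :=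
    walkWeight_congr d fun t ht => by
      rcases ht.lt_or_eq with ht | rfl
      · simp [ht]
      · simp [hI]
  have htail : (fun x => if p + x < p then I (p + x) else I (p + x + c)) =
      fun x => I (p + c + x) := by
    funext x
    simp [add_right_comm]
  rw [walkWeight_add d I (p + c), walkWeight_add d I p, walkWeight_add d _ p, hhead, htail]
  linarith

theorem exists_add_eq_of_card_lt [Fintype ι] (I : ℕ → ι) {m : ℕ} (hm : Fintype.card ι < m) :
    ∃ p c, 0 < c ∧ p + c ≤ m ∧ I (p + c) = I p := by
  obtain ⟨x, y, hxy, hI⟩ :=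
    Fintype.exists_ne_map_eq_of_card_lt (fun x : Fin m => I x) (by simpa using hm)
  rcases lt_or_gt_of_ne (Fin.val_injective.ne hxy) with h | h
  · exact ⟨x, y - x, by omega, by omega, by rw [Nat.add_sub_cancel' h.le]; exact hI.symm⟩
  · exact ⟨y, x - y, by omega, by omega, by rw [Nat.add_sub_cancel' h.le]; exact hI⟩

variable {d}

theorem exists_walkWeight_le [Fintype ι]
    (hcyc : ∀ n (I : ℕ → ι), I n = I 0 → walkWeight d I n ≤ 0) :
    ∃ B, ∀ m I, walkWeight d I m ≤ B := by
  obtain ⟨C, hC⟩ := (Set.finite_range fun e : ι × ι => d e.1 e.2).bddAbove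
  have hdC : ∀ i k, d i k ≤ max C 0 := fun i k => (hC ⟨(i, k), rfl⟩).trans (le_max_left _ _)
  refine ⟨Fintype.card ι * max C 0, fun m => ?_⟩
  induction m using Nat.strong_induction_on with
  | _ m ih =>
  intro I
  by_cases hm : m ≤ Fintype.card ι
  · calc walkWeight d I m ≤ m * max C 0 := by
          simpa [walkWeight] using sum_le_card_nsmul (range m) _ _ fun t _ => hdC (I t) (I (t + 1))
      _ ≤ Fintype.card ι * max C 0 := by gcongr
  · obtain ⟨p, c, hc, hpc, hI⟩ := exists_add_eq_of_card_lt I (not_le.1 hm)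
    obtain ⟨l, rfl⟩ := Nat.exists_eq_add_of_le hpc
    calc walkWeight d I (p + c + l)
        ≤ walkWeight d (fun t => if t < p then I t else I (t + c)) (p + l) :=
          walkWeight_le_skip d hI (hcyc c _ (by simpa using hI)) l
      _ ≤ _ := ih _ (by omega) _

theorem exists_potential_of_walkWeight_nonpos [Fintype ι]
    (hcyc : ∀ n (I : ℕ → ι), I n = I 0 → walkWeight d I n ≤ 0) :
    ∃ q : ι → ℝ, ∀ i k, d i k + q k ≤ q i := by
  obtain ⟨B, hB⟩ := exists_walkWeight_le hcyc
  let W : ι → Set ℝ := fun k => {w | ∃ m I, I 0 = k ∧ walkWeight d I m = w}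
  have hne : ∀ k, (W k).Nonempty := fun k => ⟨0, 0, fun _ => k, rfl, by simp [walkWeight]⟩
  have hbdd : ∀ k, BddAbove (W k) := fun k => ⟨B, by rintro _ ⟨m, I, -, rfl⟩; exact hB m I⟩
  refine ⟨fun k => sSup (W k), fun i k => ?_⟩
  rw [← le_sub_iff_add_le', csSup_le_iff (hbdd k) (hne k)]
  rintro _ ⟨m, I, rfl, rfl⟩
  rw [le_sub_iff_add_le', ← walkWeight_cons]
  exact le_csSup (hbdd i) ⟨m + 1, _, rfl, rfl⟩

end WalkWeight

section CycleShift

variable {ι κ : Type*} [DecidableEq ι] [DecidableEq κ]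

def cycleShift (n : ℕ) (I : ℕ → ι) (J : ℕ → κ) (w : ℕ → ℝ) (p : ι) (q : κ) : ℝ :=
  ∑ t ∈ range n, w t *
    ((if I (t + 1) = p ∧ J t = q then 1 else 0) - if I t = p ∧ J t = q then 1 else 0)

variable (n : ℕ) (I : ℕ → ι) (J : ℕ → κ) (w : ℕ → ℝ)

theorem sum_cycleShift_col [Fintype ι] (q : κ) : ∑ p, cycleShift n I J w p q = 0 := by
  unfold cycleShift
  rw [sum_comm]
  refine sum_eq_zero fun t _ => ?_
  simp [← mul_sum, ite_and]

theorem sum_mul_cycleShift_row [Fintype κ] (F : κ → ℝ) (p : ι) :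
    ∑ q, F q * cycleShift n I J w p q =
      ∑ t ∈ range n, w t *
        ((if I (t + 1) = p then F (J t) else 0) - if I t = p then F (J t) else 0) := by
  simp only [cycleShift, mul_sum]
  rw [sum_comm]
  refine sum_congr rfl fun t _ => ?_
  split_ifs <;> simp_all [mul_comm]

theorem sum_mul_cycleShift_row_eq_sub [Fintype κ] (F : ι → κ → ℝ) (G : ℕ → ℝ)
    (hG : ∀ t, w t * F (I (t + 1)) (J t) = G (t + 1) ∧ w t * F (I t) (J t) = G t) (p : ι) :
    ∑ q, F p q * cycleShift n I J w p q =
      (if I n = p then G n else 0) - if I 0 = p then G 0 else 0 := by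
  rw [sum_mul_cycleShift_row, ← sum_range_sub (fun t => if I t = p then G t else 0)]
  refine sum_congr rfl fun t _ => ?_
  rw [mul_sub]
  congr 1 <;> split_ifs with h
  · rw [← h, (hG t).1]
  · rw [mul_zero]
  · rw [← h, (hG t).2]
  · rw [mul_zero]

theorem sum_sum_mul_cycleShift [Fintype ι] [Fintype κ] (F : ι → κ → ℝ) :
    ∑ p, ∑ q, F p q * cycleShift n I J w p q =
      ∑ t ∈ range n, w t * (F (I (t + 1)) (J t) - F (I t) (J t)) := by
  simp only [sum_mul_cycleShift_row]
  rw [sum_comm]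
  simp [← mul_sum, sum_sub_distrib]

theorem exists_pos_add_mul_cycleShift_nonneg [Finite ι] [Finite κ] {X : ι → κ → ℝ}
    (hX : ∀ p q, 0 ≤ X p q) (hw : ∀ t, 0 ≤ w t) (hpos : ∀ t < n, 0 < X (I t) (J t)) :
    ∃ ε > 0, ∀ p q, 0 ≤ X p q + ε * cycleShift n I J w p q := by
  have key : ∀ p q, ∀ᶠ ε in 𝓝[>] (0 : ℝ), 0 ≤ X p q + ε * cycleShift n I J w p q := by
    intro p q
    rcases (hX p q).lt_or_eq with h | h
    · have hcont : Continuous fun ε : ℝ => X p q + ε * cycleShift n I J w p q := by fun_prop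
      have hlim := (hcont.tendsto' 0 (X p q) (by simp)).mono_left
        (nhdsWithin_le_nhds (s := Set.Ioi 0))
      exact (hlim.eventually_const_lt h).mono fun ε h => h.le
    · -- off the support of `X` the shift only adds mass
      have hS : 0 ≤ cycleShift n I J w p q := sum_nonneg fun t ht => by
        have : ¬ (I t = p ∧ J t = q) := by
          rintro ⟨rfl, rfl⟩
          exact (hpos t (mem_range.1 ht)).ne' h.symm
        rw [if_neg this, sub_zero]
        exact mul_nonneg (hw t) (by split_ifs <;> norm_num)
      filter_upwards [self_mem_nhdsWithin] with ε (hε : 0 < ε)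
      rw [← h, zero_add]
      exact mul_nonneg hε.le hS
  obtain ⟨ε, hε, hεpos⟩ :=
    ((eventually_all.2 fun p => eventually_all.2 (key p)).and self_mem_nhdsWithin).exists
  exact ⟨ε, hεpos, hε⟩

end CycleShift

section Transport

variable {ι κ : Type*} [Fintype ι] [Fintype κ]

def IsOptimalTransport (a : ι → κ → ℝ) (r : ι → ℝ) (c : κ → ℝ) (X : ι → κ → ℝ) : Prop :=
  Feasible r c X ∧
    ∀ Y, Feasible r c Y → ∑ i, ∑ j, a i j * Y i j ≤ ∑ i, ∑ j, a i j * X i j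

def NoPositiveCycle (a X : ι → κ → ℝ) : Prop :=
  ∀ n (I : ℕ → ι) (J : ℕ → κ), I n = I 0 → (∀ t < n, 0 < X (I t) (J t)) →
    ∑ t ∈ range n, (a (I (t + 1)) (J t) - a (I t) (J t)) ≤ 0

/-- Complementary slackness: `(-u, v)` is a dual solution of the transport problem with
weights `a`, tight on the support of `X`. -/
def IsPotential (a X : ι → κ → ℝ) (u : ι → ℝ) (v : κ → ℝ) : Prop :=
  (∀ i j, u i + a i j ≤ v j) ∧ ∀ i j, 0 < X i j → u i + a i j = v j

theorem sum_sum_mul_congr_of_pos {f g X : ι → κ → ℝ} (hX : ∀ i j, 0 ≤ X i j)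
    (hfg : ∀ i j, 0 < X i j → f i j = g i j) :
    ∑ i, ∑ j, f i j * X i j = ∑ i, ∑ j, g i j * X i j :=
  sum_congr rfl fun i _ => sum_congr rfl fun j _ => by
    rcases (hX i j).lt_or_eq with h | h
    · rw [hfg i j h]
    · rw [← h, mul_zero, mul_zero]

theorem sum_sum_sub_mul_of_feasible {r : ι → ℝ} {c : κ → ℝ} {Z : ι → κ → ℝ}
    (hZ : Feasible r c Z) (u : ι → ℝ) (v : κ → ℝ) :
    ∑ i, ∑ j, (v j - u i) * Z i j = ∑ j, v j * c j - ∑ i, u i * r i := by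
  simp only [sub_mul, sum_sub_distrib, ← hZ.2.1, ← hZ.2.2, mul_sum]
  rw [sum_comm]

theorem isOptimalTransport_of_isPotential {a X : ι → κ → ℝ} {r : ι → ℝ} {c : κ → ℝ}
    {u : ι → ℝ} {v : κ → ℝ} (hX : Feasible r c X) (h : IsPotential a X u v) :
    IsOptimalTransport a r c X := by
  refine ⟨hX, fun Y hY => ?_⟩
  calc ∑ i, ∑ j, a i j * Y i j ≤ ∑ i, ∑ j, (v j - u i) * Y i j := by
        gcongr with i _ j _
        · exact hY.1 i j
        · linarith [h.1 i j]
    _ = ∑ i, ∑ j, (v j - u i) * X i j := by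
        rw [sum_sum_sub_mul_of_feasible hY, sum_sum_sub_mul_of_feasible hX]
    _ = ∑ i, ∑ j, a i j * X i j :=
        sum_sum_mul_congr_of_pos hX.1 fun i j hij => by linarith [h.2 i j hij]

theorem paretoEffLin_of_weights {b X : ι → κ → ℝ} {c : κ → ℝ} {w : ι → ℝ} {M : κ → ℝ}
    (hw : ∀ i, 0 < w i) (hle : ∀ i j, w i * b i j ≤ M j)
    (heq : ∀ i j, 0 < X i j → w i * b i j = M j) (hX : PrimFeasible c X) :
    ParetoEffLin b c X := by
  have hweighted : ∀ Z : ι → κ → ℝ, ∑ i, w i * ∑ j, b i j * Z i j =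
      ∑ i, ∑ j, w i * b i j * Z i j := fun Z => by simp only [mul_sum, mul_assoc]
  have hbound : ∀ Z : ι → κ → ℝ, PrimFeasible c Z → ∑ i, ∑ j, M j * Z i j = ∑ j, M j * c j := by
    intro Z hZ
    simp only [← hZ.2, mul_sum]
    exact sum_comm
  refine ⟨hX, ?_⟩
  rintro ⟨Y, hY, hXY, i, hi⟩
  have hlt : ∑ i, w i * ∑ j, b i j * X i j < ∑ i, w i * ∑ j, b i j * Y i j :=
    sum_lt_sum (fun i _ => mul_le_mul_of_nonneg_left (hXY i) (hw i).le)
      ⟨i, mem_univ _, mul_lt_mul_of_pos_left hi (hw i)⟩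
  have hYle : ∑ i, ∑ j, w i * b i j * Y i j ≤ ∑ i, ∑ j, M j * Y i j := by
    gcongr with i _ j _
    · exact hY.1 i j
    · exact hle i j
  rw [hweighted, hweighted, sum_sum_mul_congr_of_pos hX.1 heq, hbound X hX] at hlt
  rw [hbound Y hY] at hYle
  linarith

theorem paretoEffLin_of_isPotential_log {b X : ι → κ → ℝ} (hb : ∀ i j, 0 < b i j) {c : κ → ℝ}
    {u : ι → ℝ} {v : κ → ℝ} (hX : PrimFeasible c X)
    (h : IsPotential (fun i j => Real.log (b i j)) X u v) :
    ParetoEffLin b c X := by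
  have hexp : ∀ i j, Real.exp (u i + Real.log (b i j)) = Real.exp (u i) * b i j := fun i j => by
    rw [Real.exp_add, Real.exp_log (hb i j)]
  refine paretoEffLin_of_weights (w := fun i => Real.exp (u i)) (M := fun j => Real.exp (v j))
    (fun i => Real.exp_pos _) (fun i j => ?_) (fun i j hij => ?_) hX
  · rw [← hexp]
    exact Real.exp_le_exp.2 (h.1 i j)
  · rw [← hexp, h.2 i j hij]

end Transport

section Cycles

variable {ι κ : Type*} [Fintype ι] [Fintype κ]

theorem noPositiveCycle_of_isOptimalTransport {a X : ι → κ → ℝ} {r : ι → ℝ} {c : κ → ℝ}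
    (hX : IsOptimalTransport a r c X) : NoPositiveCycle a X := by
  classical
  intro n I J hI hpos
  by_contra! hcyc
  obtain ⟨ε, hε, hY0⟩ :=
    exists_pos_add_mul_cycleShift_nonneg n I J 1 hX.1.1 (fun _ => zero_le_one) hpos
  have hrow : ∀ p, ∑ q, cycleShift n I J 1 p q = 0 := fun p => by
    simpa [hI] using sum_mul_cycleShift_row_eq_sub n I J 1 (fun _ _ => 1) 1 (by simp) p
  have hY : Feasible r c fun p q => X p q + ε * cycleShift n I J 1 p q := by
    refine ⟨hY0, fun q => ?_, fun p => ?_⟩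
    · rw [sum_add_distrib, ← mul_sum, sum_cycleShift_col, hX.1.2.1, mul_zero, add_zero]
    · rw [sum_add_distrib, ← mul_sum, hrow, hX.1.2.2, mul_zero, add_zero]
  have hgain := hX.2 _ hY
  simp only [mul_add, sum_add_distrib, mul_left_comm _ ε, ← mul_sum, sum_sum_mul_cycleShift,
    Pi.one_apply, one_mul] at hgain
  nlinarith

theorem noPositiveCycle_log_of_paretoEffLin {b X : ι → κ → ℝ} (hb : ∀ i j, 0 < b i j)
    {c : κ → ℝ} (hX : ParetoEffLin b c X) :
    NoPositiveCycle (fun i j => Real.log (b i j)) X := by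
  classical
  intro n I J hI hpos
  by_contra! hcyc
  -- the weights make the shift utility-neutral for every agent except `I 0`, who gains
  set Q : ℕ → ℝ := fun t => Real.exp
    (∑ s ∈ range t, (Real.log (b (I (s + 1)) (J s)) - Real.log (b (I s) (J s))))
  set w : ℕ → ℝ := fun t => Q t / b (I t) (J t)
  have hw : ∀ t, w t * b (I (t + 1)) (J t) = Q (t + 1) ∧ w t * b (I t) (J t) = Q t := fun t => by
    refine ⟨?_, div_mul_cancel₀ _ (hb _ _).ne'⟩
    simp only [w, Q, sum_range_succ, Real.exp_add, Real.exp_sub, Real.exp_log (hb _ _)]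
    ring
  have hQn : 1 < Q n := Real.one_lt_exp_iff.2 hcyc
  obtain ⟨ε, hε, hY0⟩ := exists_pos_add_mul_cycleShift_nonneg n I J w hX.1.1
    (fun t => (div_pos (Real.exp_pos _) (hb _ _)).le) hpos
  have hgain : ∀ p, ∑ j, b p j * (X p j + ε * cycleShift n I J w p j) =
      ∑ j, b p j * X p j + ε * (if I 0 = p then Q n - 1 else 0) := fun p => by
    simp only [mul_add, sum_add_distrib, mul_left_comm _ ε, ← mul_sum,
      sum_mul_cycleShift_row_eq_sub n I J w b Q hw p, hI]
    split_ifs <;> simp [Q]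
  refine hX.2 ⟨_, ⟨hY0, fun q => ?_⟩, fun p => ?_, I 0, ?_⟩
  · rw [sum_add_distrib, ← mul_sum, sum_cycleShift_col, hX.1.2, mul_zero, add_zero]
  · rw [hgain]
    split_ifs <;> nlinarith
  · rw [hgain, if_pos rfl]
    nlinarith

theorem exists_isPotential_of_noPositiveCycle {a X : ι → κ → ℝ}
    (hsupp : ∀ i, ∃ j, 0 < X i j) (h : NoPositiveCycle a X) :
    ∃ u v, IsPotential a X u v := by
  classical
  have hJ : ∀ i k, ∃ j, 0 < X i j ∧ ∀ j', 0 < X i j' → a k j' - a i j' ≤ a k j - a i j := by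
    intro i k
    obtain ⟨j, hj, hmax⟩ := exists_max_image (univ.filter fun j => 0 < X i j)
      (fun j => a k j - a i j) (by simpa [Finset.Nonempty] using hsupp i)
    exact ⟨j, (mem_filter.1 hj).2, fun j' hj' => hmax j' (by simpa using hj')⟩
  choose J hJpos hJmax using hJ
  obtain ⟨q, hq⟩ := exists_potential_of_walkWeight_nonpos
    (d := fun i k => a k (J i k) - a i (J i k))
    fun n I hI => h n I (fun t => J (I t) (I (t + 1))) hI fun t _ => hJpos _ _
  have hle : ∀ i j, q i + a i j ≤ ⨆ k, (q k + a k j) := fun i j =>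
    le_ciSup (f := fun k => q k + a k j) (Finite.bddAbove_range _) i
  refine ⟨q, fun j => ⨆ k, (q k + a k j), hle, fun i j hij => ?_⟩
  have : Nonempty ι := ⟨i⟩
  refine le_antisymm (hle i j) (ciSup_le fun k => ?_)
  linarith [hJmax i k j hij, hq i k]

end Cycles

theorem stmt_6_general {ι κ : Type*} [Fintype ι] [Fintype κ]
    (b : ι → κ → ℝ) (hb : ∀ i j, 0 < b i j)
    (r : ι → ℝ) (c : κ → ℝ) (hr : ∀ i, 0 < r i)
    (X : ι → κ → ℝ) :
    BalancedLin b c r X ↔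
      (Feasible r c X ∧
        ∀ Y : ι → κ → ℝ, Feasible r c Y →
          ∑ i, ∑ j, Real.log (b i j) * Y i j ≤
            ∑ i, ∑ j, Real.log (b i j) * X i j) := by
  have hsupp : (∀ i, ∑ j, X i j = r i) → ∀ i, ∃ j, 0 < X i j := fun hrow i => by
    simpa using exists_lt_of_sum_lt (s := univ) (f := 0) (g := X i) (by simpa [hrow i] using hr i)
  change _ ↔ IsOptimalTransport (fun i j => Real.log (b i j)) r c X
  constructor
  · rintro ⟨hpareto, hrow⟩
    obtain ⟨u, v, h⟩ := exists_isPotential_of_noPositiveCycle (hsupp hrow)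
      (noPositiveCycle_log_of_paretoEffLin hb hpareto)
    exact isOptimalTransport_of_isPotential ⟨hpareto.1.1, hpareto.1.2, hrow⟩ h
  · intro hopt
    obtain ⟨u, v, h⟩ := exists_isPotential_of_noPositiveCycle (hsupp hopt.1.2.2)
      (noPositiveCycle_of_isOptimalTransport hopt)
    exact ⟨paretoEffLin_of_isPotential_log hb ⟨hopt.1.1, hopt.1.2.1⟩ h, hopt.1.2.2⟩

/-- balanced solutions of the linear MOMA problem are exactly the
optimal solutions of the optimal transport problem with weights `log (b i j)`. -/
theorem stmt_6 {ι κ : Type*} [Fintype ι] [Fintype κ]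
    (b : ι → κ → ℝ) (hb : ∀ i j, 0 < b i j)
    (r : ι → ℝ) (c : κ → ℝ) (hr : ∀ i, 0 < r i) (hc : ∀ j, 0 < c j)
    (hgf : ∑ i, r i = ∑ j, c j) (X : ι → κ → ℝ) :
    BalancedLin b c r X ↔
      (Feasible r c X ∧
        ∀ Y : ι → κ → ℝ, Feasible r c Y →
          ∑ i, ∑ j, Real.log (b i j) * Y i j ≤
            ∑ i, ∑ j, Real.log (b i j) * X i j) :=
  stmt_6_general b hb r c hr X
end
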